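/- arXiv:2111.02031 — 2 statements merged into one kernel-verified Lean document; each statement's English description precedes it below -/
import Mathlib

section
/- For t large enough (so that 5π/(4t) < 1), the integral T(t) = ∫_{ℝ²} e^{−|ξ|²} sin²(t|ξ|)/|ξ|² dξ satisfies T(t) ≥ (2π) · (e^{−1}/4) · (log t + log 4 − log(5π)). -/
/-!
In polar coordinates the integral is `2π ∫₀^∞ e^{-r²} sin²(tr) / r dr`. Keeping only
`r ∈ [5π/(4t), 1]`, where `e^{-r²} ≥ e^{-1}`, and substituting `u = tr` leaves
`∫_{5π/4}^t sin² u / u du`. Writing `sin² u = ψ' u + 1/4` with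
`ψ u = (u - A + 1 - sin 2u) / 4 ≥ 0` for `u ≥ A` and integrating by parts
bounds `∫_A^B sin² u / u du` below by `log (B / A) / 4 - ψ A / A`, and `ψ (5π/4) = 0`.
-/

open MeasureTheory Set Real

theorem integral_fun_norm_euclideanSpace_fin_two (f : ℝ → ℝ) :
    ∫ ξ : EuclideanSpace ℝ (Fin 2), f ‖ξ‖ = 2 * π * ∫ y in Ioi 0, y * f y := by
  have h := integral_fun_norm_addHaar (volume : Measure (EuclideanSpace ℝ (Fin 2))) f
  have hball : volume.real (Metric.ball (0 : EuclideanSpace ℝ (Fin 2)) 1) = π := by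
    rw [measureReal_def, EuclideanSpace.volume_ball]
    norm_num [sq_sqrt pi_pos.le, Gamma_two, ENNReal.toReal_ofReal pi_pos.le]
  simp only [finrank_euclideanSpace, Fintype.card_fin, smul_eq_mul, nsmul_eq_mul,
    hball] at h
  rw [h]
  norm_num [mul_assoc]

theorem le_integral_sin_sq_div {A B : ℝ} (hA : 0 < A) (hAB : A ≤ B) :
    log (B / A) / 4 - (1 - sin (2 * A)) / (4 * A) ≤ ∫ u in A..B, sin u ^ 2 / u := by
  -- `sin² u / u = (ψ u / u + log u / 4)' + ψ u / u²`, and `ψ ≥ 0` on `[A, ∞)`.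
  set ψ : ℝ → ℝ := fun u => (u - A + 1 - sin (2 * u)) / 4 with hψ
  have hpos : ∀ u ∈ uIcc A B, 0 < u := fun u hu =>
    hA.trans_le (by rw [uIcc_of_le hAB] at hu; exact hu.1)
  have hderiv : ∀ u ∈ uIcc A B,
      HasDerivAt (fun u => ψ u / u + log u / 4) (sin u ^ 2 / u - ψ u / u ^ 2) u := by
    intro u hu
    have hu0 := (hpos u hu).ne'
    have hψ' : HasDerivAt ψ ((1 - cos (2 * u) * 2) / 4) u := by
      have h2 : HasDerivAt (fun u : ℝ => 2 * u) 2 u := by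
        simpa using (hasDerivAt_id u).const_mul (2 : ℝ)
      exact ((((hasDerivAt_id u).sub_const A).add_const 1).sub
        ((hasDerivAt_sin _).comp u h2)).div_const 4
    refine ((hψ'.div (hasDerivAt_id' u) hu0).add
      ((hasDerivAt_log hu0).div_const 4)).congr_deriv ?_
    simp only [hψ, cos_two_mul, cos_sq']
    field_simp
    ring
  have hcont : ContinuousOn (fun u => sin u ^ 2 / u) (uIcc A B) :=
    (continuous_sin.pow 2).continuousOn.div continuousOn_id fun u hu => (hpos u hu).ne'
  have hcontψ : ContinuousOn (fun u => ψ u / u ^ 2) (uIcc A B) :=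
    (by fun_prop : Continuous ψ).continuousOn.div (continuous_pow 2).continuousOn
      fun u hu => pow_ne_zero 2 (hpos u hu).ne'
  have hFTC := intervalIntegral.integral_eq_sub_of_hasDerivAt hderiv
    ((hcont.sub hcontψ).intervalIntegrable)
  have hmono : ∫ u in A..B, (sin u ^ 2 / u - ψ u / u ^ 2) ≤ ∫ u in A..B, sin u ^ 2 / u := by
    refine intervalIntegral.integral_mono_on hAB ((hcont.sub hcontψ).intervalIntegrable)
      hcont.intervalIntegrable fun u hu => ?_
    have : 0 ≤ ψ u := by simp only [hψ]; linarith [sin_le_one (2 * u), hu.1]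
    have : 0 ≤ ψ u / u ^ 2 := by positivity
    linarith
  have hψB : 0 ≤ ψ B / B := div_nonneg (by simp only [hψ]; linarith [sin_le_one (2 * B)])
    (hA.le.trans hAB)
  have hψA : ψ A / A = (1 - sin (2 * A)) / (4 * A) := by
    simp only [hψ, sub_self, zero_add, div_div]
  rw [hFTC] at hmono
  rw [log_div (hA.trans_le hAB).ne' hA.ne']
  linarith

theorem integral_sin_sq_mul_div {t : ℝ} (ht : t ≠ 0) (a b : ℝ) :
    ∫ r in a..b, sin (t * r) ^ 2 / r = ∫ u in t * a..t * b, sin u ^ 2 / u := by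
  have h : ∀ r, sin (t * r) ^ 2 / r = t * (sin (t * r) ^ 2 / (t * r)) := fun r => by
    rcases eq_or_ne r 0 with rfl | hr
    · simp
    · field_simp
  simp_rw [h, intervalIntegral.integral_const_mul,
    intervalIntegral.integral_comp_mul_left (fun u => sin u ^ 2 / u) ht, smul_eq_mul,
    mul_inv_cancel_left₀ ht]

theorem integrableOn_Ioi_mul_exp_neg_sq_mul_sin_sq_div_sq (t : ℝ) :
    IntegrableOn (fun y : ℝ => y * (exp (-y ^ 2) * sin (t * y) ^ 2 / y ^ 2)) (Ioi 0) := by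
  have hmeas : Measurable fun y : ℝ => y * (exp (-y ^ 2) * sin (t * y) ^ 2 / y ^ 2) := by
    fun_prop
  refine Integrable.mono ((integrable_mul_exp_neg_mul_sq one_pos).const_mul (t ^ 2)).integrableOn
    hmeas.aestronglyMeasurable ?_
  filter_upwards [ae_restrict_mem measurableSet_Ioi] with y (hy : 0 < y)
  rw [norm_of_nonneg (by positivity), norm_of_nonneg (by positivity)]
  calc y * (exp (-y ^ 2) * sin (t * y) ^ 2 / y ^ 2)
      ≤ y * (exp (-y ^ 2) * (t * y) ^ 2 / y ^ 2) := by
        gcongr y * (_ * ?_ / _); exact sin_sq_le_sq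
    _ = t ^ 2 * (y * exp (-1 * y ^ 2)) := by field_simp

theorem exp_neg_one_mul_integral_sin_sq_mul_div_le {a : ℝ} (ha : 0 < a) (ha1 : a ≤ 1)
    (t : ℝ) :
    exp (-1) * ∫ r in a..1, sin (t * r) ^ 2 / r
      ≤ ∫ y in Ioi 0, y * (exp (-y ^ 2) * sin (t * y) ^ 2 / y ^ 2) := by
  have hIoc : Ioc a 1 ⊆ Ioi 0 := fun y hy => ha.trans hy.1
  have hcont : ContinuousOn (fun r => exp (-1) * (sin (t * r) ^ 2 / r)) (Icc a 1) :=
    continuousOn_const.mul <|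
      (by fun_prop : Continuous fun r => sin (t * r) ^ 2).continuousOn.div continuousOn_id
        fun r hr => (ha.trans_le hr.1).ne'
  rw [intervalIntegral.integral_of_le ha1, ← integral_const_mul]
  calc ∫ r in Ioc a 1, exp (-1) * (sin (t * r) ^ 2 / r)
      ≤ ∫ y in Ioc a 1, y * (exp (-y ^ 2) * sin (t * y) ^ 2 / y ^ 2) := by
        refine setIntegral_mono_on ((hcont.integrableOn_Icc).mono_set Ioc_subset_Icc_self)
          ((integrableOn_Ioi_mul_exp_neg_sq_mul_sin_sq_div_sq t).mono_set hIoc)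
          measurableSet_Ioc fun y hy => ?_
        have hy0 : 0 < y := ha.trans hy.1
        have hexp : exp (-1) ≤ exp (-y ^ 2) := exp_le_exp.mpr (by nlinarith [hy.2])
        calc exp (-1) * (sin (t * y) ^ 2 / y) ≤ exp (-y ^ 2) * (sin (t * y) ^ 2 / y) := by
              gcongr
          _ = y * (exp (-y ^ 2) * sin (t * y) ^ 2 / y ^ 2) := by field_simp
    _ ≤ ∫ y in Ioi 0, y * (exp (-y ^ 2) * sin (t * y) ^ 2 / y ^ 2) :=
        setIntegral_mono_set (integrableOn_Ioi_mul_exp_neg_sq_mul_sin_sq_div_sq t)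
          (ae_restrict_of_forall_mem measurableSet_Ioi fun y (hy : 0 < y) => by positivity)
          (.of_forall hIoc)

theorem stmt_6 (t : ℝ) (ht : 1 < t) (ht' : 5 * Real.pi / (4 * t) < 1) :
    (2 * Real.pi) * (Real.exp (-1) / 4) * (Real.log t + Real.log 4 - Real.log (5 * Real.pi))
      ≤ ∫ ξ : EuclideanSpace ℝ (Fin 2),
          Real.exp (-‖ξ‖ ^ 2) * Real.sin (t * ‖ξ‖) ^ 2 / ‖ξ‖ ^ 2 := by
  have ht0 : 0 < t := one_pos.trans ht
  have hA : 5 * π / 4 ≤ t := by rw [div_lt_one (by positivity)] at ht'; linarith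
  have hsin : sin (2 * (5 * π / 4)) = 1 := by
    rw [show 2 * (5 * π / 4) = π / 2 + 2 * π by ring, sin_add_two_pi, sin_pi_div_two]
  have hlog : log (t / (5 * π / 4)) = log t + log 4 - log (5 * π) := by
    rw [div_div_eq_mul_div, log_div (by positivity) (by positivity), log_mul ht0.ne' (by norm_num)]
  have key : (log t + log 4 - log (5 * π)) / 4 ≤ ∫ u in 5 * π / 4..t, sin u ^ 2 / u := by
    have := le_integral_sin_sq_div (by positivity) hA
    rwa [hsin, hlog, sub_self, zero_div, sub_zero] at this
  have hta : t * (5 * π / (4 * t)) = 5 * π / 4 := by field_simp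
  calc 2 * π * (exp (-1) / 4) * (log t + log 4 - log (5 * π))
      = 2 * π * (exp (-1) * ((log t + log 4 - log (5 * π)) / 4)) := by ring
    _ ≤ 2 * π * (exp (-1) * ∫ r in 5 * π / (4 * t)..1, sin (t * r) ^ 2 / r) := by
        rw [integral_sin_sq_mul_div ht0.ne', hta, mul_one]
        gcongr
    _ ≤ 2 * π * ∫ y in Ioi 0, y * (exp (-y ^ 2) * sin (t * y) ^ 2 / y ^ 2) := by
        gcongr
        exact exp_neg_one_mul_integral_sin_sq_mul_div_le (by positivity) ht'.le t
    _ = _ := (integral_fun_norm_euclideanSpace_fin_two _).symm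
end

section
/- For t ≥ 1 with 5π/(4t) < 1, letting ν_j = (1/4 + j)π/t and μ_j = (3/4 + j)π/t for j ∈ ℕ, one has ∑_{j=0}^∞ ∫_{ν_j}^{μ_j} e^{−r²}/r dr ≥ (1/2) ∫_{ν_1}^∞ e^{−r²}/r dr. -/
open MeasureTheory intervalIntegral

set_option maxHeartbeats 1000000 in
theorem stmt_19 (t : ℝ) (ht : 1 ≤ t) (ht' : 5 * Real.pi / (4 * t) < 1) :
    (1 / 2) * (∫ r in Set.Ioi ((1 / 4 + 1) * Real.pi / t), Real.exp (-r ^ 2) / r)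
      ≤ ∑' j : ℕ, ∫ r in ((1 / 4 + (j : ℝ)) * Real.pi / t)..((3 / 4 + (j : ℝ)) * Real.pi / t),
          Real.exp (-r ^ 2) / r := by
  have ht0 : (0:ℝ) < t := lt_of_lt_of_le one_pos ht
  have hπ := Real.pi_pos
  have hpt : (0:ℝ) < Real.pi / t := div_pos hπ ht0
  set f : ℝ → ℝ := fun r => Real.exp (-r ^ 2) / r with hfdef
  set a : ℕ → ℝ := fun j => (1 / 4 + (j : ℝ)) * Real.pi / t with hadef
  set b : ℕ → ℝ := fun j => (3 / 4 + (j : ℝ)) * Real.pi / t with hbdef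
  have hapos : ∀ j, 0 < a j := by
    intro j; simp only [hadef]; positivity
  have hbpos : ∀ j, 0 < b j := by
    intro j; simp only [hbdef]; positivity
  have hab : ∀ j, a j < b j := by
    intro j; simp only [hadef, hbdef]
    rw [div_lt_div_iff₀ ht0 ht0]
    nlinarith [hπ, ht0]
  have hba : ∀ j, b j < a (j + 1) := by
    intro j; simp only [hadef, hbdef]
    push_cast
    rw [div_lt_div_iff₀ ht0 ht0]
    nlinarith [hπ, ht0]
  have haa : ∀ j, a j < a (j + 1) := fun j => (hab j).trans (hba j)
  have hale : ∀ m n : ℕ, m ≤ n → a m ≤ a n := by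
    intro m n hmn; simp only [hadef]
    have hmn' : (m:ℝ) ≤ (n:ℝ) := Nat.cast_le.mpr hmn
    rw [div_le_div_iff₀ ht0 ht0]
    nlinarith [hπ, ht0, mul_le_mul_of_nonneg_right (mul_le_mul_of_nonneg_right hmn' hπ.le) ht0.le]
  have hfnn : ∀ r : ℝ, 0 ≤ r → 0 ≤ f r := fun r hr =>
    div_nonneg (Real.exp_nonneg _) hr
  have hcont : ContinuousOn f (Set.Ioi (0:ℝ)) := by
    apply ContinuousOn.div
    · exact (Real.continuous_exp.comp ((continuous_pow 2).neg)).continuousOn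
    · exact continuousOn_id
    · intro x hx; exact ne_of_gt hx
  have hII : ∀ x y : ℝ, 0 < x → 0 < y → IntervalIntegrable f volume x y := by
    intro x y hx hy
    apply ContinuousOn.intervalIntegrable
    apply hcont.mono
    intro z hz
    exact lt_of_lt_of_le (lt_min hx hy) hz.1
  have hIoi : ∀ x : ℝ, 0 < x → IntegrableOn f (Set.Ioi x) := by
    intro x hx
    have hmeas : AEStronglyMeasurable f (volume.restrict (Set.Ioi x)) := by
      apply Measurable.aestronglyMeasurable
      exact (Real.measurable_exp.comp ((measurable_id.pow_const 2).neg)).div measurable_id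
    apply Integrable.mono' (g := fun r => x⁻¹ * Real.exp (-1 * r ^ 2))
      (((integrable_exp_neg_mul_sq one_pos).const_mul _).integrableOn) hmeas
    rw [ae_restrict_iff' measurableSet_Ioi]
    filter_upwards with r hr
    have hr0 : 0 < r := lt_trans hx hr
    rw [Real.norm_eq_abs, abs_of_nonneg (hfnn r hr0.le)]
    simp only [hfdef]
    rw [neg_one_mul, mul_comm, ← div_eq_mul_inv]
    exact div_le_div₀ (Real.exp_nonneg _) le_rfl hx (le_of_lt hr)
  -- half inequality
  set c : ℝ := Real.pi / (2 * t) with hcdef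
  have hc0 : 0 < c := by positivity
  have hac : ∀ j, a j + c = b j := by
    intro j; simp only [hadef, hbdef, hcdef]; field_simp; ring
  have hbc : ∀ j, b j + c = a (j + 1) := by
    intro j; simp only [hadef, hbdef, hcdef]; push_cast; field_simp; ring
  have hhalf : ∀ j, (∫ r in a j..a (j + 1), f r) ≤ 2 * ∫ r in a j..b j, f r := by
    intro j
    rw [← intervalIntegral.integral_add_adjacent_intervals
      (hII _ _ (hapos j) (hbpos j)) (hII _ _ (hbpos j) (hapos (j + 1)))]
    have key : (∫ r in b j..a (j + 1), f r) ≤ ∫ r in a j..b j, f r := by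
      have hsub : (∫ r in b j..a (j + 1), f r) = ∫ x in a j..b j, f (x + c) := by
        rw [intervalIntegral.integral_comp_add_right f c, hac j, hbc j]
      rw [hsub]
      apply intervalIntegral.integral_mono_on (hab j).le
      · apply ContinuousOn.intervalIntegrable
        apply ContinuousOn.comp hcont (by fun_prop)
        intro z hz
        have h1 : a j ⊓ b j ≤ z := hz.1
        have h2 := lt_of_lt_of_le (lt_min (hapos j) (hbpos j)) h1
        simp only [Set.mem_Ioi]
        linarith
      · exact hII _ _ (hapos j) (hbpos j)
      · intro x hx
        have hx0 : 0 < x := lt_of_lt_of_le (hapos j) hx.1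
        simp only [hfdef]
        apply div_le_div₀ (Real.exp_nonneg _) _ hx0 (by linarith)
        apply Real.exp_le_exp.mpr
        nlinarith
    linarith
  have hg_nonneg : ∀ j, 0 ≤ ∫ r in a j..b j, f r := by
    intro j
    apply intervalIntegral.integral_nonneg (hab j).le
    intro x hx
    exact hfnn x (le_trans (hapos j).le hx.1)
  have hh_nonneg : ∀ j, 0 ≤ ∫ r in a j..a (j + 1), f r := by
    intro j
    apply intervalIntegral.integral_nonneg (haa j).le
    intro x hx
    exact hfnn x (le_trans (hapos j).le hx.1)
  -- partial sums of gap integrals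
  have hpartial0 : ∀ n : ℕ, (∑ i ∈ Finset.range n, ∫ r in (a i)..(a (i + 1)), f r)
      = ∫ r in (a 0)..(a n), f r := by
    intro n
    exact intervalIntegral.sum_integral_adjacent_intervals
      (fun i _ => hII _ _ (hapos _) (hapos _))
  have hpartial1 : ∀ n : ℕ, (∑ i ∈ Finset.range n, ∫ r in (a (i + 1))..(a (i + 1 + 1)), f r)
      = ∫ r in (a 1)..(a (n + 1)), f r := by
    intro n
    have := intervalIntegral.sum_integral_adjacent_intervals
      (a := fun i => a (i + 1)) (μ := volume) (f := f) (n := n)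
      (fun i _ => hII _ _ (hapos _) (hapos _))
    simpa using this
  have hbound : ∀ n : ℕ, (∫ r in (a 0)..(a n), f r) ≤ ∫ r in Set.Ioi (a 0), f r := by
    intro n
    rw [intervalIntegral.integral_of_le (hale 0 n (Nat.zero_le _))]
    apply setIntegral_mono_set (hIoi _ (hapos 0))
    · exact (ae_restrict_iff' measurableSet_Ioi).mpr
        (Filter.Eventually.of_forall fun r hr => hfnn r (le_trans (hapos 0).le hr.le))
    · exact Filter.Eventually.of_forall fun r hr => hr.1
  have hSummable_h : Summable (fun j => ∫ r in a j..a (j + 1), f r) := by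
    apply summable_of_sum_range_le hh_nonneg (c := ∫ r in Set.Ioi (a 0), f r)
    intro n
    rw [hpartial0 n]
    exact hbound n
  have hgh : ∀ j, (∫ r in a j..b j, f r) ≤ ∫ r in a j..a (j + 1), f r := by
    intro j
    rw [← intervalIntegral.integral_add_adjacent_intervals
      (hII _ _ (hapos j) (hbpos j)) (hII _ _ (hbpos j) (hapos (j + 1)))]
    have h0 : 0 ≤ ∫ r in b j..a (j + 1), f r := by
      apply intervalIntegral.integral_nonneg (hba j).le
      intro x hx
      exact hfnn x (le_trans (hbpos j).le hx.1)
    linarith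
  have hSummable_g : Summable (fun j => ∫ r in a j..b j, f r) :=
    Summable.of_nonneg_of_le hg_nonneg hgh hSummable_h
  -- tail sum equality
  have hs1 : Summable (fun j => ∫ r in (a (j + 1))..(a (j + 1 + 1)), f r) :=
    (summable_nat_add_iff 1).mpr hSummable_h
  have htend : Filter.Tendsto (fun n : ℕ => a (n + 1)) Filter.atTop Filter.atTop := by
    apply Filter.tendsto_atTop_mono (f := fun n : ℕ => (n : ℝ) * (Real.pi / t))
    · intro n
      simp only [hadef]
      push_cast
      rw [show (n:ℝ) * (Real.pi / t) = ((n:ℝ) * Real.pi) / t by ring,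
        div_le_div_iff₀ ht0 ht0]
      nlinarith [hπ, ht0, mul_pos hπ ht0]
    · exact Filter.Tendsto.atTop_mul_const hpt tendsto_natCast_atTop_atTop
  have htailsum : (∑' j : ℕ, ∫ r in (a (j + 1))..(a (j + 1 + 1)), f r)
      = ∫ r in Set.Ioi (a 1), f r := by
    apply tendsto_nhds_unique hs1.hasSum.tendsto_sum_nat
    have h1 : Filter.Tendsto (fun n : ℕ => ∫ r in (a 1)..(a (n + 1)), f r) Filter.atTop
        (nhds (∫ r in Set.Ioi (a 1), f r)) :=
      MeasureTheory.intervalIntegral_tendsto_integral_Ioi _ (hIoi _ (hapos 1)) htend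
    have h2 : (fun n : ℕ => ∑ i ∈ Finset.range n, ∫ r in (a (i + 1))..(a (i + 1 + 1)), f r)
        = fun n : ℕ => ∫ r in (a 1)..(a (n + 1)), f r := by
      funext n
      exact hpartial1 n
    rw [h2]
    exact h1
  -- final chaining
  have hfinal : (1 / 2) * (∫ r in Set.Ioi (a 1), f r) ≤ ∑' j : ℕ, ∫ r in a j..b j, f r := by
    rw [← htailsum]
    calc (1 / 2) * ∑' j : ℕ, ∫ r in (a (j + 1))..(a (j + 1 + 1)), f r
        = ∑' j : ℕ, (1 / 2) * ∫ r in (a (j + 1))..(a (j + 1 + 1)), f r := by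
          rw [tsum_mul_left]
      _ ≤ ∑' j : ℕ, ∫ r in (a (j + 1))..(b (j + 1)), f r := by
          apply Summable.tsum_le_tsum _ (hs1.mul_left _) ((summable_nat_add_iff 1).mpr hSummable_g)
          intro j
          have := hhalf (j + 1)
          linarith
      _ ≤ ∑' j : ℕ, ∫ r in a j..b j, f r := by
          have h0 := hg_nonneg 0
          calc (∑' j : ℕ, ∫ r in (a (j + 1))..(b (j + 1)), f r)
              ≤ (∫ r in (a 0)..(b 0), f r) + ∑' j : ℕ, ∫ r in (a (j + 1))..(b (j + 1)), f r :=
                le_add_of_nonneg_left h0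
            _ = ∑' j : ℕ, ∫ r in a j..b j, f r := (Summable.tsum_eq_zero_add hSummable_g).symm
  have hset : Set.Ioi ((1 / 4 + 1) * Real.pi / t) = Set.Ioi (a 1) := by
    simp [hadef]
  rw [hset]
  exact hfinal
end
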